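/- arXiv:1410.4517 — 5 statements merged into one kernel-verified Lean document; each statement's English description precedes it below -/
import Mathlib

section
/- If M is a monoidal category in which the unit object I is terminal, then the functor F: Bimod_M(^{Id}M^I, ^{Id}M^I) → M sending a bimodule endofunctor φ to φ(I) is part of an equivalence of categories, with inverse Ind sending X to the endofunctor Y ↦ Y ⊗ X. -/
open CategoryTheory MonoidalCategory

variable (M : Type*) [Category M] [MonoidalCategory M]

/-- An endomorphism of the `M`-bimodule `^{Id}M^{I}`: `M` with the regular left
action `X ▷ B = X ⊗ B` and the trivial right action `B ◁ X = B`.  The datum is a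
functor `F : M ⥤ M` with coherences `lam_{X,B} : F(X ▷ B) ≅ X ▷ F(B)` and
`rho_{B,X} : F(B ◁ X) ≅ F(B) ◁ X`, i.e. `rho_{B,X} : F(B) ≅ F(B)`. -/
structure LeftRegEndo where
  F : M ⥤ M
  lam : ∀ X B : M, F.obj (X ⊗ B) ≅ X ⊗ F.obj B
  rho : ∀ B X : M, F.obj B ≅ F.obj B
  lam_natural : ∀ {X X' B B' : M} (f : X ⟶ X') (g : B ⟶ B'),
    F.map (f ⊗ₘ g) ≫ (lam X' B').hom = (lam X B).hom ≫ (f ⊗ₘ F.map g)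
  rho_natural_left : ∀ {B B' : M} (g : B ⟶ B') (X : M),
    F.map g ≫ (rho B' X).hom = (rho B X).hom ≫ F.map g
  rho_natural_right : ∀ (B : M) {X X' : M}, (X ⟶ X') → (rho B X).hom = (rho B X').hom
  lam_coherence : ∀ X Y B : M,
    F.map (α_ X Y B).hom ≫ (lam X (Y ⊗ B)).hom ≫ (X ◁ (lam Y B).hom) =
      (lam (X ⊗ Y) B).hom ≫ (α_ X Y (F.obj B)).hom
  rho_coherence : ∀ B X Y : M,
    (rho B X).hom ≫ (rho B Y).hom = (rho B (X ⊗ Y)).hom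
  rho_unit : ∀ B : M, rho B (𝟙_ M) = Iso.refl (F.obj B)
  middle_coherence : ∀ X B Y : M,
    (rho (X ⊗ B) Y).hom ≫ (lam X B).hom = (lam X B).hom ≫ (X ◁ (rho B Y).hom)

instance : Category (LeftRegEndo M) where
  Hom p q := { t : p.F ⟶ q.F //
    (∀ X B : M, t.app (X ⊗ B) ≫ (q.lam X B).hom = (p.lam X B).hom ≫ (X ◁ t.app B)) ∧
    (∀ B X : M, t.app B ≫ (q.rho B X).hom = (p.rho B X).hom ≫ t.app B) }
  id p := ⟨𝟙 p.F, fun X B => by simp, fun B X => by simp⟩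
  comp {p q r} t s := ⟨t.1 ≫ s.1, fun X B => by
      rw [NatTrans.comp_app, Category.assoc, s.2.1, ← Category.assoc, t.2.1,
        Category.assoc, NatTrans.comp_app, MonoidalCategory.whiskerLeft_comp],
    fun B X => by
      rw [NatTrans.comp_app, Category.assoc, s.2.2, ← Category.assoc, t.2.2,
        Category.assoc]⟩
  id_comp t := Subtype.ext (Category.id_comp _)
  comp_id t := Subtype.ext (Category.comp_id _)
  assoc f g h := Subtype.ext (Category.assoc _ _ _)

/-- Evaluation of a bimodule endofunctor of `^{Id}M^{I}` at the unit object. -/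
def evalAtUnit : LeftRegEndo M ⥤ M where
  obj p := p.F.obj (𝟙_ M)
  map t := t.1.app (𝟙_ M)
  map_id _ := rfl
  map_comp _ _ := rfl

/-
The left coherence `lam` identifies `φ(B) ≅ φ(B ⊗ I) ≅ B ⊗ φ(I)`, naturally in `B` and
compatibly with `lam`, so `φ ≅ Ind(φ(I))`; in the other direction `Ind(X)(I) = I ⊗ X ≅ X`.
The right coherences `rho` impose nothing: since `I` is terminal, `rho_{B,X} = rho_{B,I} = id`,
so every natural transformation respects them.
-/

namespace LeftRegEndo

variable {M}

lemma rho_hom_eq_id_of_isTerminal (hI : Limits.IsTerminal (𝟙_ M)) (p : LeftRegEndo M)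
    (B X : M) : (p.rho B X).hom = 𝟙 (p.F.obj B) := by
  rw [p.rho_natural_right B (hI.from X), p.rho_unit B, Iso.refl_hom]

def mkIso {p q : LeftRegEndo M} (e : p.F ≅ q.F)
    (hlam : ∀ X B : M,
      e.hom.app (X ⊗ B) ≫ (q.lam X B).hom = (p.lam X B).hom ≫ (X ◁ e.hom.app B))
    (hrho : ∀ B X : M, e.hom.app B ≫ (q.rho B X).hom = (p.rho B X).hom ≫ e.hom.app B) :
    p ≅ q where
  hom := ⟨e.hom, hlam, hrho⟩
  inv := ⟨e.inv,
    fun X B => by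
      rw [← cancel_epi (e.hom.app (X ⊗ B)), Iso.hom_inv_id_app_assoc, reassoc_of% hlam,
        ← MonoidalCategory.whiskerLeft_comp, Iso.hom_inv_id_app, MonoidalCategory.whiskerLeft_id,
        Category.comp_id],
    fun B X => by
      rw [← cancel_epi (e.hom.app B), Iso.hom_inv_id_app_assoc, reassoc_of% hrho,
        Iso.hom_inv_id_app, Category.comp_id]⟩
  hom_inv_id := Subtype.ext e.hom_inv_id
  inv_hom_id := Subtype.ext e.inv_hom_id

def ind (X : M) : LeftRegEndo M where
  F := tensorRight X
  lam A B := α_ A B X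
  rho _ _ := Iso.refl _
  lam_natural f g := by simpa using associator_naturality f g (𝟙 X)
  rho_natural_left g _ := by simp
  rho_natural_right _ _ _ _ := rfl
  lam_coherence A Y B := pentagon A Y B X
  rho_coherence _ _ _ := Category.id_comp _
  rho_unit _ := rfl
  middle_coherence _ _ _ := by simp

variable (M) in
def indFunctor : M ⥤ LeftRegEndo M where
  obj := ind
  map f := ⟨(tensoringRight M).map f,
    fun A B => by simp [ind],
    fun _ _ => by simp [ind]⟩
  map_id X := Subtype.ext ((tensoringRight M).map_id X)
  map_comp f g := Subtype.ext ((tensoringRight M).map_comp f g)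

def isoTensorRight (p : LeftRegEndo M) : p.F ≅ tensorRight (p.F.obj (𝟙_ M)) :=
  NatIso.ofComponents (fun B => p.F.mapIso (ρ_ B).symm ≪≫ p.lam B (𝟙_ M)) fun g => by
    have h := p.lam_natural g (𝟙 (𝟙_ M))
    rw [p.F.map_id, tensorHom_id, tensorHom_id] at h
    dsimp
    rw [← p.F.map_comp_assoc, rightUnitor_inv_naturality, p.F.map_comp_assoc, h, Category.assoc]

lemma isoTensorRight_hom_app (p : LeftRegEndo M) (B : M) :
    p.isoTensorRight.hom.app B = p.F.map (ρ_ B).inv ≫ (p.lam B (𝟙_ M)).hom := rfl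

lemma isoTensorRight_hom_app_tensor (p : LeftRegEndo M) (A B : M) :
    p.isoTensorRight.hom.app (A ⊗ B) ≫ (α_ A B (p.F.obj (𝟙_ M))).hom =
      (p.lam A B).hom ≫ (A ◁ p.isoTensorRight.hom.app B) := by
  have hnat := p.lam_natural (𝟙 A) (ρ_ B).inv
  simp only [id_tensorHom] at hnat
  rw [isoTensorRight_hom_app, isoTensorRight_hom_app, Category.assoc,
    ← p.lam_coherence A B (𝟙_ M), rightUnitor_tensor_inv, ← p.F.map_comp_assoc, Category.assoc,
    Iso.inv_hom_id, Category.comp_id, MonoidalCategory.whiskerLeft_comp, reassoc_of% hnat]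

lemma hom_app_comp_isoTensorRight_hom_app {p q : LeftRegEndo M} (t : p ⟶ q) (B : M) :
    t.1.app B ≫ q.isoTensorRight.hom.app B =
      p.isoTensorRight.hom.app B ≫ (B ◁ t.1.app (𝟙_ M)) := by
  rw [isoTensorRight_hom_app, isoTensorRight_hom_app, ← t.1.naturality_assoc, Category.assoc,
    t.2.1 B (𝟙_ M)]

def isoIndEvalAtUnit (hI : Limits.IsTerminal (𝟙_ M)) (p : LeftRegEndo M) :
    p ≅ ind (p.F.obj (𝟙_ M)) :=
  mkIso p.isoTensorRight (isoTensorRight_hom_app_tensor p) fun _ _ => by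
    simp [ind, rho_hom_eq_id_of_isTerminal hI]

def evalAtUnitEquivalence (hI : Limits.IsTerminal (𝟙_ M)) : LeftRegEndo M ≌ M :=
  CategoryTheory.Equivalence.mk (evalAtUnit M) (indFunctor M)
    (NatIso.ofComponents (isoIndEvalAtUnit hI) fun t =>
      Subtype.ext (NatTrans.ext (funext (hom_app_comp_isoTensorRight_hom_app t))))
    (leftUnitorNatIso M)

end LeftRegEndo

/-- If the unit object `I` of a monoidal category `M` is terminal,
then evaluation at `I` is an equivalence of categories
`Bimod_M(^{Id}M^{I}, ^{Id}M^{I}) ≃ M` (with inverse `X ↦ (Y ↦ Y ⊗ X)`). -/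
theorem stmt_2 (hI : Limits.IsTerminal (𝟙_ M)) :
    (evalAtUnit M).IsEquivalence :=
  (LeftRegEndo.evalAtUnitEquivalence hI).isEquivalence_functor
end

section
/- For a monoidal functor G: M → V, the category Z^G(M) of pairs (V, c), where V is an object of V and c is a monoidal natural isomorphism c_X: V ⊗ G(X) → G(X) ⊗ V satisfying the tensor compatibility c_{X⊗Y} = (associators and) (c_X ⊗ Id_Y) ∘ (Id ⊗ c_Y) appropriately bracketed, is a monoidal category with (V,c^V) ⊗ (W,c^W) = (V⊗W, c^{V⊗W}) where c^{V⊗W}_X = α ∘ (c^V_X ⊗ Id_W) ∘ α^{-1} ∘ (Id_V ⊗ c^W_X) ∘ α, and the forgetful functor Z^G(M) → M (via representing data in V) is strict monoidal on the centralizing data. -/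
/-!
The half-braiding of `p ⊗ q` is built from those of `p` and `q`, so its naturality follows by
sliding `G f` past one factor at a time. For the monoidal axiom, expanding both half-braidings
with their own monoidal axioms leaves a composite `μ ≫ δ` in the middle, which is the identity
because `G` is strong monoidal; an interchange of the inner half-braidings of `q` and `p` then
matches the bracketing. Morphisms of `Z^G(M)` are morphisms of `V` with a property that the
associator and unitors of `V` have by coherence, so every axiom of the monoidal category is
inherited from `V`.
-/

open CategoryTheory MonoidalCategory CategoryTheory.Functor

variable {M V : Type*} [Category M] [MonoidalCategory M] [Category V]
  [MonoidalCategory V]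

/-- An object of the Drinfeld center `Z^G(M)` of `M` relative to a monoidal functor
`G : M ⥤ V`: an object `V₀` of `V` together with a monoidal natural isomorphism
`c_X : V₀ ⊗ G(X) ≅ G(X) ⊗ V₀`. -/
structure RelCenter (G : M ⥤ V) [G.Monoidal] where
  V : V
  β : ∀ X : M, V ⊗ G.obj X ≅ G.obj X ⊗ V
  natural : ∀ {X Y : M} (f : X ⟶ Y),
    (V ◁ G.map f) ≫ (β Y).hom = (β X).hom ≫ (G.map f ▷ V)
  monoidal : ∀ X Y : M,
    (β (X ⊗ Y)).hom = (V ◁ OplaxMonoidal.δ G X Y) ≫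
      (α_ V (G.obj X) (G.obj Y)).inv ≫ ((β X).hom ▷ G.obj Y) ≫
      (α_ (G.obj X) V (G.obj Y)).hom ≫ (G.obj X ◁ (β Y).hom) ≫
      (α_ (G.obj X) (G.obj Y) V).inv ≫ (LaxMonoidal.μ G X Y ▷ V)

variable {G : M ⥤ V} [G.Monoidal]

instance : Category (RelCenter G) where
  Hom p q := { f : p.V ⟶ q.V //
    ∀ X : M, (f ▷ G.obj X) ≫ (q.β X).hom = (p.β X).hom ≫ (G.obj X ◁ f) }
  id p := ⟨𝟙 p.V, fun X => by simp⟩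
  comp {p q r} f g := ⟨f.1 ≫ g.1, fun X => by
    rw [comp_whiskerRight, Category.assoc, g.2, ← Category.assoc, f.2,
      Category.assoc, MonoidalCategory.whiskerLeft_comp]⟩
  id_comp f := Subtype.ext (Category.id_comp _)
  comp_id f := Subtype.ext (Category.comp_id _)
  assoc f g h := Subtype.ext (Category.assoc _ _ _)

/-- The candidate half-braiding on the tensor product of the underlying objects of
two objects of the relative center:
`c^{V⊗W}_X = α ∘ (c^V_X ⊗ Id) ∘ α⁻¹ ∘ (Id ⊗ c^W_X) ∘ α`. -/
def tensorβ (p q : RelCenter G) (X : M) :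
    (p.V ⊗ q.V) ⊗ G.obj X ≅ G.obj X ⊗ (p.V ⊗ q.V) :=
  α_ p.V q.V (G.obj X) ≪≫ whiskerLeftIso p.V (q.β X) ≪≫
    (α_ p.V (G.obj X) q.V).symm ≪≫ whiskerRightIso (p.β X) q.V ≪≫
    α_ (G.obj X) p.V q.V

/-- The candidate half-braiding on the unit object. -/
def unitβ (X : M) : 𝟙_ V ⊗ G.obj X ≅ G.obj X ⊗ 𝟙_ V :=
  λ_ (G.obj X) ≪≫ (ρ_ (G.obj X)).symm

theorem tensorβ_hom (p q : RelCenter G) (X : M) :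
    (tensorβ p q X).hom = (α_ p.V q.V (G.obj X)).hom ≫ p.V ◁ (q.β X).hom ≫
      (α_ p.V (G.obj X) q.V).inv ≫ (p.β X).hom ▷ q.V ≫ (α_ (G.obj X) p.V q.V).hom :=
  rfl

theorem tensorβ_natural (p q : RelCenter G) {X Y : M} (f : X ⟶ Y) :
    ((p.V ⊗ q.V) ◁ G.map f) ≫ (tensorβ p q Y).hom =
      (tensorβ p q X).hom ≫ (G.map f ▷ (p.V ⊗ q.V)) :=
  calc
    _ = 𝟙 _ ⊗≫ p.V ◁ (q.V ◁ G.map f ≫ (q.β Y).hom) ⊗≫ (p.β Y).hom ▷ q.V ⊗≫ 𝟙 _ := by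
      rw [tensorβ_hom]; monoidal
    _ = 𝟙 _ ⊗≫ p.V ◁ (q.β X).hom ⊗≫ (p.V ◁ G.map f ≫ (p.β Y).hom) ▷ q.V ⊗≫ 𝟙 _ := by
      rw [q.natural]; monoidal
    _ = _ := by rw [p.natural, tensorβ_hom]; monoidal

theorem tensorβ_monoidal (p q : RelCenter G) (X Y : M) :
    (tensorβ p q (X ⊗ Y)).hom = ((p.V ⊗ q.V) ◁ OplaxMonoidal.δ G X Y) ≫
      (α_ (p.V ⊗ q.V) (G.obj X) (G.obj Y)).inv ≫
      ((tensorβ p q X).hom ▷ G.obj Y) ≫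
      (α_ (G.obj X) (p.V ⊗ q.V) (G.obj Y)).hom ≫
      (G.obj X ◁ (tensorβ p q Y).hom) ≫
      (α_ (G.obj X) (G.obj Y) (p.V ⊗ q.V)).inv ≫
      (LaxMonoidal.μ G X Y ▷ (p.V ⊗ q.V)) :=
  calc
    _ = 𝟙 _ ⊗≫ (p.V ⊗ q.V) ◁ OplaxMonoidal.δ G X Y ⊗≫
          p.V ◁ (q.β X).hom ▷ G.obj Y ⊗≫ p.V ◁ G.obj X ◁ (q.β Y).hom ⊗≫
          p.V ◁ (LaxMonoidal.μ G X Y ▷ q.V ≫ OplaxMonoidal.δ G X Y ▷ q.V) ⊗≫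
          (p.β X).hom ▷ G.obj Y ▷ q.V ⊗≫ G.obj X ◁ (p.β Y).hom ▷ q.V ⊗≫
          LaxMonoidal.μ G X Y ▷ (p.V ⊗ q.V) ⊗≫ 𝟙 _ := by
      rw [tensorβ_hom, p.monoidal, q.monoidal]; monoidal
    _ = 𝟙 _ ⊗≫ (p.V ⊗ q.V) ◁ OplaxMonoidal.δ G X Y ⊗≫
          p.V ◁ (q.β X).hom ▷ G.obj Y ⊗≫ (_ ◁ (q.β Y).hom ≫ (p.β X).hom ▷ _) ⊗≫
          G.obj X ◁ (p.β Y).hom ▷ q.V ⊗≫ LaxMonoidal.μ G X Y ▷ (p.V ⊗ q.V) ⊗≫ 𝟙 _ := by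
      rw [Functor.Monoidal.whiskerRight_μ_δ, MonoidalCategory.whiskerLeft_id]; monoidal
    _ = _ := by rw [whisker_exchange, tensorβ_hom, tensorβ_hom]; monoidal

theorem tensorβ_whiskerLeft (p : RelCenter G) {q r : RelCenter G} (f : q ⟶ r) (X : M) :
    ((p.V ◁ f.1) ▷ G.obj X) ≫ (tensorβ p r X).hom =
      (tensorβ p q X).hom ≫ (G.obj X ◁ (p.V ◁ f.1)) :=
  calc
    _ = 𝟙 _ ⊗≫ p.V ◁ (f.1 ▷ G.obj X ≫ (r.β X).hom) ⊗≫ (p.β X).hom ▷ r.V ⊗≫ 𝟙 _ := by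
      rw [tensorβ_hom]; monoidal
    _ = 𝟙 _ ⊗≫ p.V ◁ (q.β X).hom ⊗≫ (_ ◁ f.1 ≫ (p.β X).hom ▷ r.V) ⊗≫ 𝟙 _ := by
      rw [f.2]; monoidal
    _ = _ := by rw [whisker_exchange, tensorβ_hom]; monoidal

theorem tensorβ_whiskerRight {p q : RelCenter G} (f : p ⟶ q) (r : RelCenter G) (X : M) :
    ((f.1 ▷ r.V) ▷ G.obj X) ≫ (tensorβ q r X).hom =
      (tensorβ p r X).hom ≫ (G.obj X ◁ (f.1 ▷ r.V)) :=
  calc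
    _ = 𝟙 _ ⊗≫ (f.1 ▷ _ ≫ q.V ◁ (r.β X).hom) ⊗≫ (q.β X).hom ▷ r.V ⊗≫ 𝟙 _ := by
      rw [tensorβ_hom]; monoidal
    _ = 𝟙 _ ⊗≫ p.V ◁ (r.β X).hom ⊗≫ (f.1 ▷ G.obj X ≫ (q.β X).hom) ▷ r.V ⊗≫ 𝟙 _ := by
      rw [← whisker_exchange]; monoidal
    _ = _ := by rw [f.2, tensorβ_hom]; monoidal

theorem unitβ_natural {X Y : M} (f : X ⟶ Y) :
    ((𝟙_ V) ◁ G.map f) ≫ (unitβ (G := G) Y).hom =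
      (unitβ (G := G) X).hom ≫ (G.map f ▷ (𝟙_ V)) := by
  simp [unitβ]

theorem unitβ_monoidal (X Y : M) :
    (unitβ (G := G) (X ⊗ Y)).hom = ((𝟙_ V) ◁ OplaxMonoidal.δ G X Y) ≫
      (α_ (𝟙_ V) (G.obj X) (G.obj Y)).inv ≫
      ((unitβ (G := G) X).hom ▷ G.obj Y) ≫
      (α_ (G.obj X) (𝟙_ V) (G.obj Y)).hom ≫
      (G.obj X ◁ (unitβ (G := G) Y).hom) ≫
      (α_ (G.obj X) (G.obj Y) (𝟙_ V)).inv ≫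
      (LaxMonoidal.μ G X Y ▷ (𝟙_ V)) := by
  simp only [unitβ, Iso.trans_hom, Iso.symm_hom]
  calc
    _ = 𝟙 _ ⊗≫ (𝟙_ V ◁ OplaxMonoidal.δ G X Y ≫ (λ_ _).hom ≫ (ρ_ _).inv ≫
          LaxMonoidal.μ G X Y ▷ 𝟙_ V) ⊗≫ 𝟙 _ := by
      rw [leftUnitor_naturality_assoc, rightUnitor_inv_naturality_assoc,
        Functor.Monoidal.whiskerRight_δ_μ]
      monoidal
    _ = _ := by monoidal

namespace RelCenter

@[ext]
theorem hom_ext {p q : RelCenter G} {f g : p ⟶ q} (h : f.1 = g.1) : f = g :=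
  Subtype.ext h

def isoMk {p q : RelCenter G} (e : p.V ≅ q.V)
    (h : ∀ X : M, (e.hom ▷ G.obj X) ≫ (q.β X).hom = (p.β X).hom ≫ (G.obj X ◁ e.hom)) :
    p ≅ q where
  hom := ⟨e.hom, h⟩
  inv := ⟨e.inv, fun X => by
    rw [← cancel_epi (e.hom ▷ G.obj X), ← comp_whiskerRight_assoc, e.hom_inv_id,
      id_whiskerRight, Category.id_comp, reassoc_of% h, ← MonoidalCategory.whiskerLeft_comp,
      e.hom_inv_id, MonoidalCategory.whiskerLeft_id, Category.comp_id]⟩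
  hom_inv_id := hom_ext e.hom_inv_id
  inv_hom_id := hom_ext e.inv_hom_id

def tensorObj (p q : RelCenter G) : RelCenter G :=
  ⟨p.V ⊗ q.V, tensorβ p q, tensorβ_natural p q, tensorβ_monoidal p q⟩

def tensorUnit : RelCenter G :=
  ⟨𝟙_ V, unitβ, unitβ_natural, unitβ_monoidal⟩

def whiskerLeft (p : RelCenter G) {q r : RelCenter G} (f : q ⟶ r) :
    tensorObj p q ⟶ tensorObj p r :=
  ⟨p.V ◁ f.1, tensorβ_whiskerLeft p f⟩

def whiskerRight {p q : RelCenter G} (f : p ⟶ q) (r : RelCenter G) :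
    tensorObj p r ⟶ tensorObj q r :=
  ⟨f.1 ▷ r.V, tensorβ_whiskerRight f r⟩

def associator (p q r : RelCenter G) :
    tensorObj (tensorObj p q) r ≅ tensorObj p (tensorObj q r) :=
  isoMk (α_ p.V q.V r.V) fun X => by
    simp only [tensorObj, tensorβ_hom]; monoidal

def leftUnitor (p : RelCenter G) : tensorObj tensorUnit p ≅ p :=
  isoMk (λ_ p.V) fun X => by
    simp only [tensorObj, tensorUnit, tensorβ_hom, unitβ, Iso.trans_hom, Iso.symm_hom]; monoidal

def rightUnitor (p : RelCenter G) : tensorObj p tensorUnit ≅ p :=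
  isoMk (ρ_ p.V) fun X => by
    simp only [tensorObj, tensorUnit, tensorβ_hom, unitβ, Iso.trans_hom, Iso.symm_hom]; monoidal

instance : MonoidalCategoryStruct (RelCenter G) where
  tensorObj := tensorObj
  whiskerLeft := whiskerLeft
  whiskerRight := whiskerRight
  tensorUnit := tensorUnit
  associator := associator
  leftUnitor := leftUnitor
  rightUnitor := rightUnitor

@[simp] theorem id_val (p : RelCenter G) : (𝟙 p : p ⟶ p).1 = 𝟙 p.V := rfl

@[simp] theorem comp_val {p q r : RelCenter G} (f : p ⟶ q) (g : q ⟶ r) :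
    (f ≫ g).1 = f.1 ≫ g.1 := rfl

theorem tensorHom_val {p₁ q₁ p₂ q₂ : RelCenter G} (f : p₁ ⟶ q₁) (g : p₂ ⟶ q₂) :
    (f ⊗ₘ g).1 = f.1 ⊗ₘ g.1 :=
  (MonoidalCategory.tensorHom_def _ _).symm

instance monoidalCategory : MonoidalCategory (RelCenter G) where
  tensorHom_def _ _ := rfl
  id_tensorHom_id _ _ := hom_ext <| by
    simp only [id_val, tensorHom_val]; exact id_tensorHom_id _ _
  tensorHom_comp_tensorHom _ _ _ _ := hom_ext <| by
    simp only [comp_val, tensorHom_val]; exact tensorHom_comp_tensorHom _ _ _ _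
  whiskerLeft_id _ _ := hom_ext (MonoidalCategory.whiskerLeft_id _ _)
  id_whiskerRight _ _ := hom_ext (id_whiskerRight _ _)
  associator_naturality _ _ _ := hom_ext <| by
    simp only [comp_val, tensorHom_val]; exact associator_naturality _ _ _
  leftUnitor_naturality _ := hom_ext (leftUnitor_naturality _)
  rightUnitor_naturality _ := hom_ext (rightUnitor_naturality _)
  pentagon _ _ _ _ := hom_ext (pentagon _ _ _ _)
  triangle _ _ := hom_ext (triangle _ _)

end RelCenter

/-- For a monoidal functor `G : M ⥤ V`, the relative Drinfeld center
`Z^G(M)` is a monoidal category with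
`(V, c^V) ⊗ (W, c^W) = (V ⊗ W, c^{V⊗W})`,
`c^{V⊗W}_X = α ∘ (c^V_X ⊗ Id) ∘ α⁻¹ ∘ (Id ⊗ c^W_X) ∘ α`, and the forgetful functor
to the underlying data is strict monoidal on the centralizing data. -/
theorem stmt_4 :
    ∃ hcl : ∀ p q : RelCenter G,
      (∀ {X Y : M} (f : X ⟶ Y),
        ((p.V ⊗ q.V) ◁ G.map f) ≫ (tensorβ p q Y).hom =
          (tensorβ p q X).hom ≫ (G.map f ▷ (p.V ⊗ q.V))) ∧
      (∀ X Y : M,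
        (tensorβ p q (X ⊗ Y)).hom = ((p.V ⊗ q.V) ◁ OplaxMonoidal.δ G X Y) ≫
          (α_ (p.V ⊗ q.V) (G.obj X) (G.obj Y)).inv ≫
          ((tensorβ p q X).hom ▷ G.obj Y) ≫
          (α_ (G.obj X) (p.V ⊗ q.V) (G.obj Y)).hom ≫
          (G.obj X ◁ (tensorβ p q Y).hom) ≫
          (α_ (G.obj X) (G.obj Y) (p.V ⊗ q.V)).inv ≫
          (LaxMonoidal.μ G X Y ▷ (p.V ⊗ q.V))),
    ∃ hu : (∀ {X Y : M} (f : X ⟶ Y),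
        ((𝟙_ V) ◁ G.map f) ≫ (unitβ (G := G) Y).hom =
          (unitβ (G := G) X).hom ≫ (G.map f ▷ (𝟙_ V))) ∧
      (∀ X Y : M,
        (unitβ (G := G) (X ⊗ Y)).hom = ((𝟙_ V) ◁ OplaxMonoidal.δ G X Y) ≫
          (α_ (𝟙_ V) (G.obj X) (G.obj Y)).inv ≫
          ((unitβ (G := G) X).hom ▷ G.obj Y) ≫
          (α_ (G.obj X) (𝟙_ V) (G.obj Y)).hom ≫
          (G.obj X ◁ (unitβ (G := G) Y).hom) ≫
          (α_ (G.obj X) (G.obj Y) (𝟙_ V)).inv ≫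
          (LaxMonoidal.μ G X Y ▷ (𝟙_ V))),
    ∃ inst : MonoidalCategory (RelCenter G),
      (∀ p q : RelCenter G,
        inst.tensorObj p q = ⟨p.V ⊗ q.V, tensorβ p q, (hcl p q).1, (hcl p q).2⟩) ∧
      (inst.tensorUnit = ⟨𝟙_ V, unitβ, hu.1, hu.2⟩) :=
  ⟨fun p q => ⟨tensorβ_natural p q, tensorβ_monoidal p q⟩, ⟨unitβ_natural, unitβ_monoidal⟩,
    RelCenter.monoidalCategory, fun _ _ => rfl, rfl⟩
end

section
/- If σ is a right 2-cocycle on a bialgebra B in a braided monoidal category, then the coproduct Δ of B, viewed as a morphism Δ: B_σ → B ⊗ B_σ, makes the cocycle twist B_σ a left B-comodule algebra: Δ is an algebra map from (B, m_σ) to the algebra B ⊗ B_σ (with braided tensor product multiplication using m on the first factor and m_σ on the second). -/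
/-!
In Sweedler notation `m_σ(a ⊗ b) = m(a₁ ⊗ b₁) σ(a₂ ⊗ b₂)`, i.e. `m_σ` is the convolution
`m ∗ σ` on the coalgebra `B ⊗ B`. Since `m` is a coalgebra map and the comultiplication of
`B ⊗ B` is coassociative,
`Δ(m_σ(x)) = m(x₁)₁ ⊗ m(x₁)₂ σ(x₂) = m(x₁) ⊗ m(x₂) σ(x₃) = m(x₁) ⊗ m_σ(x₂)`.
-/

open CategoryTheory MonoidalCategory

section
variable {C : Type*} [Category C] [MonoidalCategory C]

def convScalar {Z Y : C} (d : Z ⟶ Z ⊗ Z) (f : Z ⟶ Y) (σ : Z ⟶ 𝟙_ C) : Z ⟶ Y :=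
  d ≫ (f ⊗ₘ σ) ≫ (ρ_ Y).hom

theorem convScalar_comp_comul {Z Y : C} {d : Z ⟶ Z ⊗ Z} {f : Z ⟶ Y} {Δ : Y ⟶ Y ⊗ Y}
    (hd : d ≫ Z ◁ d = d ≫ d ▷ Z ≫ (α_ Z Z Z).hom) (hf : f ≫ Δ = d ≫ (f ⊗ₘ f))
    (σ : Z ⟶ 𝟙_ C) :
    convScalar d f σ ≫ Δ = d ≫ (f ⊗ₘ convScalar d f σ) :=
  calc convScalar d f σ ≫ Δ
      = d ≫ ((f ≫ Δ) ⊗ₘ σ) ≫ (ρ_ (Y ⊗ Y)).hom := by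
        simp only [convScalar, Category.assoc, ← rightUnitor_naturality,
          tensorHom_comp_whiskerRight_assoc]
    _ = d ≫ (d ▷ Z) ≫ ((f ⊗ₘ f) ⊗ₘ σ) ≫ (ρ_ (Y ⊗ Y)).hom := by
        rw [hf, whiskerRight_comp_tensorHom_assoc]
    _ = d ≫ (d ▷ Z) ≫ (α_ Z Z Z).hom ≫ (f ⊗ₘ ((f ⊗ₘ σ) ≫ (ρ_ Y).hom)) := by
        simp [MonoidalCategory.tensorHom_def]
    _ = d ≫ (f ⊗ₘ convScalar d f σ) := by
        rw [← reassoc_of% hd, convScalar, whiskerLeft_comp_tensorHom]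

end

theorem stmt_11_general {𝒞 : Type*} [Category 𝒞] [MonoidalCategory 𝒞] [BraidedCategory 𝒞]
    (B : 𝒞) (m : B ⊗ B ⟶ B) (one : 𝟙_ 𝒞 ⟶ B)
    (Δ : B ⟶ B ⊗ B) (ε : B ⟶ 𝟙_ 𝒞)
    -- bialgebra axioms
    (hcoassoc : Δ ≫ (Δ ▷ B) ≫ (α_ B B B).hom = Δ ≫ (B ◁ Δ))
    (hcounitl : Δ ≫ (ε ▷ B) = (λ_ B).inv)
    (hcounitr : Δ ≫ (B ◁ ε) = (ρ_ B).inv)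
    (hbialg : m ≫ Δ = (Δ ⊗ₘ Δ) ≫ tensorμ B B B B ≫ (m ⊗ₘ m))
    (hone : one ≫ Δ = (λ_ (𝟙_ 𝒞)).inv ≫ (one ⊗ₘ one))
    (σ : B ⊗ B ⟶ 𝟙_ 𝒞)
    -- the twisted multiplication `m_σ`
    (mσ : B ⊗ B ⟶ B)
    (hmσ : mσ = (Δ ⊗ₘ Δ) ≫ tensorμ B B B B ≫ (m ⊗ₘ σ) ≫ (ρ_ B).hom) :
    -- `Δ : B_σ ⟶ B ⊗ B_σ` is an algebra morphism, i.e. `B_σ` is a left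
    -- `B`-comodule algebra:
    mσ ≫ Δ = (Δ ⊗ₘ Δ) ≫ tensorμ B B B B ≫ (m ⊗ₘ mσ) ∧
    one ≫ Δ = (λ_ (𝟙_ 𝒞)).inv ≫ (one ⊗ₘ one) := by
  let _ : ComonObj B := ⟨ε, Δ, hcounitl, hcounitr, hcoassoc.symm⟩
  have hcomul_assoc := ComonObj.comul_assoc (B ⊗ B)
  rw [Comon.tensorObj_comul] at hcomul_assoc
  have hmσ_conv : mσ = convScalar ((Δ ⊗ₘ Δ) ≫ tensorμ B B B B) m σ := by
    simp [hmσ, convScalar]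
  refine ⟨?_, hone⟩
  rw [hmσ_conv]
  have hm : m ≫ Δ = ((Δ ⊗ₘ Δ) ≫ tensorμ B B B B) ≫ (m ⊗ₘ m) := by
    rw [hbialg, Category.assoc]
  exact (convScalar_comp_comul hcomul_assoc hm σ).trans (Category.assoc _ _ _)

/-- If `σ` is a (normalized) right 2-cocycle on a bialgebra `B` in a
braided monoidal category, then the coproduct `Δ : B_σ ⟶ B ⊗ B_σ` makes the cocycle
twist `B_σ` a left `B`-comodule algebra: `Δ` is multiplicative from `(B, m_σ)` to
the braided tensor product algebra `B ⊗ B_σ` (with `m` on the first factor and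
`m_σ` on the second), and preserves the unit. -/
theorem stmt_11 {𝒞 : Type*} [Category 𝒞] [MonoidalCategory 𝒞] [BraidedCategory 𝒞]
    (B : 𝒞) (m : B ⊗ B ⟶ B) (one : 𝟙_ 𝒞 ⟶ B)
    (Δ : B ⟶ B ⊗ B) (ε : B ⟶ 𝟙_ 𝒞)
    -- bialgebra axioms
    (hassoc : (m ▷ B) ≫ m = (α_ B B B).hom ≫ (B ◁ m) ≫ m)
    (hunitl : (one ▷ B) ≫ m = (λ_ B).hom)
    (hunitr : (B ◁ one) ≫ m = (ρ_ B).hom)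
    (hcoassoc : Δ ≫ (Δ ▷ B) ≫ (α_ B B B).hom = Δ ≫ (B ◁ Δ))
    (hcounitl : Δ ≫ (ε ▷ B) = (λ_ B).inv)
    (hcounitr : Δ ≫ (B ◁ ε) = (ρ_ B).inv)
    (hbialg : m ≫ Δ = (Δ ⊗ₘ Δ) ≫ tensorμ B B B B ≫ (m ⊗ₘ m))
    (hone : one ≫ Δ = (λ_ (𝟙_ 𝒞)).inv ≫ (one ⊗ₘ one))
    (hcounit_mul : m ≫ ε = (ε ⊗ₘ ε) ≫ (λ_ (𝟙_ 𝒞)).hom)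
    (hone_counit : one ≫ ε = 𝟙 (𝟙_ 𝒞))
    (σ : B ⊗ B ⟶ 𝟙_ 𝒞)
    -- `σ` is a (normalized, braided) right 2-cocycle:
    (hcocycle : (((Δ ⊗ₘ Δ) ≫ tensorμ B B B B ≫ (m ▷ (B ⊗ B))) ▷ B) ≫
        (α_ B (B ⊗ B) B).hom ≫ (B ◁ (β_ (B ⊗ B) B).hom) ≫
        (α_ B B (B ⊗ B)).inv ≫ (σ ⊗ₘ σ) ≫ (λ_ (𝟙_ 𝒞)).hom =
      (α_ B B B).hom ≫
        (B ◁ ((Δ ⊗ₘ Δ) ≫ tensorμ B B B B ≫ (m ▷ (B ⊗ B)))) ≫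
        (α_ B B (B ⊗ B)).inv ≫ (σ ⊗ₘ σ) ≫ (λ_ (𝟙_ 𝒞)).hom)
    (hnorml : (one ▷ B) ≫ σ = (λ_ B).hom ≫ ε)
    (hnormr : (B ◁ one) ≫ σ = (ρ_ B).hom ≫ ε)
    -- the twisted multiplication `m_σ`
    (mσ : B ⊗ B ⟶ B)
    (hmσ : mσ = (Δ ⊗ₘ Δ) ≫ tensorμ B B B B ≫ (m ⊗ₘ σ) ≫ (ρ_ B).hom) :
    -- `Δ : B_σ ⟶ B ⊗ B_σ` is an algebra morphism, i.e. `B_σ` is a left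
    -- `B`-comodule algebra:
    mσ ≫ Δ = (Δ ⊗ₘ Δ) ≫ tensorμ B B B B ≫ (m ⊗ₘ mσ) ∧
    one ≫ Δ = (λ_ (𝟙_ 𝒞)).inv ≫ (one ⊗ₘ one) :=
  stmt_11_general B m one Δ ε hcoassoc hcounitl hcounitr hbialg hone σ mσ hmσ
end

section
/- Every Verma module M(λ) over D_q(sl₂) is simple, for every λ ∈ k \ {0} and q not a root of unity. Consequently D_q(sl₂) has no nonzero finite-dimensional representations. -/
/-! On `M(λ)` the operator `E` lowers the basis `Fᵐ v` with nonzero coefficients (this is where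
`q` not being a root of unity enters), so it is locally nilpotent with kernel `k v`. Iterating `E`
on a nonzero vector of a submodule thus produces a nonzero multiple of `v`, which generates `M(λ)`.

In a finite-dimensional representation, conjugation by `K` scales `Eᵐ` by `q^{2m}`; these
eigenvalues are distinct, so `E` is nilpotent. But `E^{m+1} F - F E^{m+1}` is a nonzero multiple of
`K⁻¹ Eᵐ`, so `E^{m+1} = 0` forces `Eᵐ = 0`, and descending gives `1 = E⁰ = 0`. -/

open Finset

section Scalars

variable {k : Type*} [Field k]

theorem injective_pow_of_pow_ne_one {q : k} (hq0 : q ≠ 0) (hq : ∀ n : ℕ, 1 ≤ n → q ^ n ≠ 1) :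
    Function.Injective fun n : ℕ => q ^ n := by
  have hinf : ¬IsOfFinOrder (Units.mk0 q hq0) := by
    rw [isOfFinOrder_iff_pow_eq_one]
    rintro ⟨n, hn, h⟩
    exact hq n hn (by simpa [Units.ext_iff] using h)
  intro m n h
  exact injective_pow_iff_not_isOfFinOrder.mpr hinf (Units.ext (by simpa using h))

theorem geom_sum_ne_zero_of_pow_ne_one {t : k} {m : ℕ} (ht : t ^ m ≠ 1) :
    ∑ i ∈ range m, t ^ i ≠ 0 := by
  intro h
  have := geom_sum_mul t m
  rw [h, zero_mul, eq_comm, sub_eq_zero] at this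
  exact ht this

def dqCoeff (q : k) (m : ℕ) : k := (q⁻¹ - q)⁻¹ * ∑ i ∈ range m, (q ^ 2) ^ i

theorem dqCoeff_ne_zero {q : k} (hq0 : q ≠ 0) (hq : ∀ n : ℕ, 1 ≤ n → q ^ n ≠ 1) {m : ℕ}
    (hm : m ≠ 0) : dqCoeff q m ≠ 0 := by
  refine mul_ne_zero (inv_ne_zero fun h => hq 2 (by norm_num) ?_) ?_
  · rw [sub_eq_zero] at h
    calc q ^ 2 = q * q⁻¹ := by rw [h, sq]
      _ = 1 := mul_inv_cancel₀ hq0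
  · exact geom_sum_ne_zero_of_pow_ne_one (by rw [← pow_mul]; exact hq _ (by omega))

end Scalars

section Lowering

variable {k V : Type*} [Field k] [AddCommGroup V] [Module k V]

theorem exists_pow_apply_ne_zero_and_apply_eq_zero (e : Module.End k V) {w : V} (hw : w ≠ 0)
    {n : ℕ} (hn : (e ^ n) w = 0) : ∃ j, (e ^ j) w ≠ 0 ∧ e ((e ^ j) w) = 0 := by
  induction n with
  | zero => exact absurd hn hw
  | succ n ih =>
    by_cases h : (e ^ n) w = 0
    · exact ih h
    · exact ⟨n, h, by rwa [pow_succ', Module.End.mul_apply] at hn⟩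

theorem pow_apply_mem_of_forall_apply_mem {e : Module.End k V} {p : Submodule k V}
    (hp : ∀ x ∈ p, e x ∈ p) {w : V} (hw : w ∈ p) (n : ℕ) : (e ^ n) w ∈ p := by
  induction n with
  | zero => exact hw
  | succ n ih => rw [pow_succ', Module.End.mul_apply]; exact hp _ ih

variable (B : Module.Basis ℕ k V) {e : Module.End k V} {a : ℕ → k}

theorem Module.Basis.repr_apply_of_lowering (he0 : e (B 0) = 0)
    (hes : ∀ m, e (B (m + 1)) = a m • B m) (w : V) (m : ℕ) :
    B.repr (e w) m = a m * B.repr w (m + 1) := by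
  suffices (B.coord m).comp e = a m • B.coord (m + 1) from LinearMap.congr_fun this w
  refine B.ext fun i => ?_
  cases i with
  | zero => simp [he0]
  | succ i => simp [hes, Finsupp.single_apply]; split_ifs <;> simp_all

theorem Module.Basis.pow_succ_apply_eq_zero_of_lowering (he0 : e (B 0) = 0)
    (hes : ∀ m, e (B (m + 1)) = a m • B m) (m : ℕ) : (e ^ (m + 1)) (B m) = 0 := by
  induction m with
  | zero => simpa using he0
  | succ m ih => rw [pow_succ, Module.End.mul_apply, hes, map_smul, ih, smul_zero]

theorem Module.Basis.eq_repr_zero_smul_of_lowering (he0 : e (B 0) = 0)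
    (hes : ∀ m, e (B (m + 1)) = a m • B m) (ha : ∀ m, a m ≠ 0) {w : V} (hw : e w = 0) :
    w = B.repr w 0 • B 0 := by
  refine B.ext_elem_iff.mpr fun i => ?_
  cases i with
  | zero => simp
  | succ i =>
    have := B.repr_apply_of_lowering he0 hes w i
    rw [hw, map_zero, Finsupp.zero_apply, eq_comm, mul_eq_zero] at this
    simpa [ha i] using this

theorem Module.Basis.exists_pow_apply_eq_zero_of_lowering (he0 : e (B 0) = 0)
    (hes : ∀ m, e (B (m + 1)) = a m • B m) (w : V) : ∃ n, (e ^ n) w = 0 := by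
  have hw : w ∈ e.maxGenEigenspace 0 := by
    rw [← B.linearCombination_repr w]
    refine Submodule.sum_mem _ fun m _ => Submodule.smul_mem _ _ ?_
    exact (e.mem_maxGenEigenspace 0 _).mpr
      ⟨m + 1, by simpa using B.pow_succ_apply_eq_zero_of_lowering he0 hes m⟩
  simpa using (e.mem_maxGenEigenspace 0 w).mp hw

theorem Module.Basis.zero_mem_of_lowering (he0 : e (B 0) = 0)
    (hes : ∀ m, e (B (m + 1)) = a m • B m) (ha : ∀ m, a m ≠ 0) {p : Submodule k V}
    (hp : ∀ x ∈ p, e x ∈ p) (hp0 : p ≠ ⊥) : B 0 ∈ p := by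
  obtain ⟨w, hwp, hw0⟩ := p.ne_bot_iff.mp hp0
  obtain ⟨n, hn⟩ := B.exists_pow_apply_eq_zero_of_lowering he0 hes w
  obtain ⟨j, hj0, hjker⟩ := exists_pow_apply_ne_zero_and_apply_eq_zero e hw0 hn
  have hjp := pow_apply_mem_of_forall_apply_mem hp hwp j
  rw [B.eq_repr_zero_smul_of_lowering he0 hes ha hjker] at hjp hj0
  exact (p.smul_mem_iff (left_ne_zero_of_smul hj0)).mp hjp

end Lowering

section Conjugation

variable {k B : Type*} [Field k] [Ring B] [Algebra k B] {u x : B} {t : k}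

theorem mul_pow_eq_smul_pow_mul (h : u * x = t • (x * u)) (m : ℕ) :
    u * x ^ m = t ^ m • (x ^ m * u) := by
  induction m with
  | zero => simp
  | succ m ih =>
    rw [pow_succ, ← mul_assoc, ih, smul_mul_assoc, mul_assoc, h, mul_smul_comm, smul_smul,
      ← mul_assoc, ← pow_succ, ← pow_succ]

theorem isNilpotent_of_mul_eq_smul_mul [Module.Finite k B] {u' : B} (hu : u * u' = 1)
    (ht : Function.Injective fun n : ℕ => t ^ n) (h : u * x = t • (x * u)) : IsNilpotent x := by
  by_contra hx
  let conj : Module.End k B := LinearMap.mulLeft k u ∘ₗ LinearMap.mulRight k u'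
  have heig : ∀ m : ℕ, conj.HasEigenvector (t ^ m) (x ^ m) := fun m =>
    ⟨Module.End.mem_eigenspace_iff.mpr <| show u * (x ^ m * u') = _ by
        rw [← mul_assoc, mul_pow_eq_smul_pow_mul h, smul_mul_assoc, mul_assoc, hu, mul_one],
      fun hm => hx ⟨m, hm⟩⟩
  exact Module.Finite.not_linearIndependent_of_infinite _
    (Module.End.eigenvectors_linearIndependent' _ _ ht _ heig)

end Conjugation

structure IsDqSl2 {k B : Type*} [Field k] [Ring B] [Algebra k B] (q : k) (E F K Kinv : B) :
    Prop where
  mul_inv : K * Kinv = 1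
  inv_mul : Kinv * K = 1
  K_mul_E : K * E = (q ^ 2) • (E * K)
  K_mul_F : K * F = (q ^ 2)⁻¹ • (F * K)
  E_mul_F_sub : E * F - F * E = (q⁻¹ - q)⁻¹ • Kinv

namespace IsDqSl2

variable {k B C : Type*} [Field k] [Ring B] [Algebra k B] [Ring C] [Algebra k C]
  {q : k} {E F K Kinv : B}

theorem map (h : IsDqSl2 q E F K Kinv) (φ : B →ₐ[k] C) :
    IsDqSl2 q (φ E) (φ F) (φ K) (φ Kinv) where
  mul_inv := by rw [← map_mul, h.mul_inv, map_one]
  inv_mul := by rw [← map_mul, h.inv_mul, map_one]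
  K_mul_E := by rw [← map_mul, h.K_mul_E, map_smul, map_mul]
  K_mul_F := by rw [← map_mul, h.K_mul_F, map_smul, map_mul]
  E_mul_F_sub := by rw [← map_mul, ← map_mul, ← map_sub, h.E_mul_F_sub, map_smul]

theorem mul_Kinv_of_K_mul (h : IsDqSl2 q E F K Kinv) {x : B} {s : k}
    (hx : K * x = s • (x * K)) : x * Kinv = s • (Kinv * x) := by
  calc x * Kinv = Kinv * (K * x) * Kinv := by rw [← mul_assoc, h.inv_mul, one_mul]
    _ = s • (Kinv * x * (K * Kinv)) := by
      rw [hx, mul_smul_comm, smul_mul_assoc, mul_assoc, mul_assoc, mul_assoc]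
    _ = s • (Kinv * x) := by rw [h.mul_inv, mul_one]

theorem E_mul_Kinv (h : IsDqSl2 q E F K Kinv) : E * Kinv = (q ^ 2) • (Kinv * E) :=
  h.mul_Kinv_of_K_mul h.K_mul_E

theorem Kinv_mul_F (h : IsDqSl2 q E F K Kinv) (hq0 : q ≠ 0) :
    Kinv * F = (q ^ 2) • (F * Kinv) := by
  rw [h.mul_Kinv_of_K_mul h.K_mul_F, smul_smul, mul_inv_cancel₀ (pow_ne_zero 2 hq0), one_smul]

theorem E_mul_F (h : IsDqSl2 q E F K Kinv) : E * F = F * E + (q⁻¹ - q)⁻¹ • Kinv := by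
  rw [← h.E_mul_F_sub, add_sub_cancel]

theorem E_mul_F_pow (h : IsDqSl2 q E F K Kinv) (hq0 : q ≠ 0) (m : ℕ) :
    E * F ^ (m + 1) = F ^ (m + 1) * E + dqCoeff q (m + 1) • (F ^ m * Kinv) := by
  induction m with
  | zero => simpa [dqCoeff] using h.E_mul_F
  | succ n ih =>
    rw [pow_succ F (n + 1), ← mul_assoc, ih, add_mul, smul_mul_assoc, mul_assoc, mul_assoc,
      h.E_mul_F, mul_assoc, h.Kinv_mul_F hq0]
    simp only [dqCoeff, mul_add, mul_smul_comm, smul_smul, ← mul_assoc, ← pow_succ, geom_sum_succ]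
    module

theorem E_pow_mul_F (h : IsDqSl2 q E F K Kinv) (m : ℕ) :
    E ^ (m + 1) * F = F * E ^ (m + 1) + dqCoeff q (m + 1) • (Kinv * E ^ m) := by
  induction m with
  | zero => simpa [dqCoeff] using h.E_mul_F
  | succ n ih =>
    rw [pow_succ' E (n + 1), mul_assoc, ih, mul_add, ← mul_assoc, h.E_mul_F, mul_smul_comm,
      ← mul_assoc, h.E_mul_Kinv]
    simp only [dqCoeff, add_mul, smul_mul_assoc, smul_smul, mul_assoc, ← pow_succ', geom_sum_succ]
    module

theorem not_isNilpotent_E [Nontrivial B] (h : IsDqSl2 q E F K Kinv) (hq0 : q ≠ 0)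
    (hq : ∀ n : ℕ, 1 ≤ n → q ^ n ≠ 1) : ¬IsNilpotent E := by
  rintro ⟨n, hn⟩
  induction n with
  | zero => exact one_ne_zero (by rwa [pow_zero] at hn)
  | succ n ih =>
    refine ih ?_
    have hc := h.E_pow_mul_F n
    rw [hn, zero_mul, mul_zero, zero_add, eq_comm,
      smul_eq_zero_iff_right (dqCoeff_ne_zero hq0 hq n.succ_ne_zero)] at hc
    rw [← one_mul (E ^ n), ← h.mul_inv, mul_assoc, hc, mul_zero]

theorem isEmpty_algHom [Nontrivial C] [Module.Finite k C]
    (h : IsDqSl2 q E F K Kinv) (hq0 : q ≠ 0) (hq : ∀ n : ℕ, 1 ≤ n → q ^ n ≠ 1) :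
    IsEmpty (B →ₐ[k] C) := by
  refine ⟨fun φ => (h.map φ).not_isNilpotent_E hq0 hq ?_⟩
  refine isNilpotent_of_mul_eq_smul_mul (h.map φ).mul_inv ?_ (h.map φ).K_mul_E
  exact injective_pow_of_pow_ne_one (pow_ne_zero 2 hq0) fun n hn => by
    rw [← pow_mul]; exact hq _ (by omega)

theorem verma_eq_bot_or_eq_top (h : IsDqSl2 q E F K Kinv) (hq0 : q ≠ 0)
    (hq : ∀ n : ℕ, 1 ≤ n → q ^ n ≠ 1) {V : Type*} [AddCommGroup V] [Module k V] [Module B V]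
    [IsScalarTower k B V] {lam : k} (hlam : lam ≠ 0) {v : V} (hKv : K • v = lam • v)
    (hEv : E • v = 0) (hli : LinearIndependent k fun m : ℕ => F ^ m • v)
    (hspan : Submodule.span k (Set.range fun m : ℕ => F ^ m • v) = ⊤) (p : Submodule B V) :
    p = ⊥ ∨ p = ⊤ := by
  rcases eq_or_ne p ⊥ with hp | hp
  · exact .inl hp
  have hKinv : Kinv • v = lam⁻¹ • v := by
    calc Kinv • v = lam⁻¹ • Kinv • K • v := by
          rw [hKv, smul_comm Kinv lam, smul_smul, inv_mul_cancel₀ hlam, one_smul]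
      _ = lam⁻¹ • v := by rw [smul_smul Kinv, h.inv_mul, one_smul]
  have hEF : ∀ m : ℕ, E • F ^ (m + 1) • v = (dqCoeff q (m + 1) * lam⁻¹) • F ^ m • v := by
    intro m
    rw [smul_smul, h.E_mul_F_pow hq0, add_smul, mul_smul, hEv, smul_zero, zero_add, smul_assoc,
      mul_smul, hKinv, smul_comm _ lam⁻¹, smul_smul]
  let b := Module.Basis.mk hli hspan.ge
  have hv : v ∈ p := by
    simpa [b] using b.zero_mem_of_lowering (e := Algebra.lsmul k k V E)
      (by simpa [b] using hEv) (by simpa [b] using hEF)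
      (fun m => mul_ne_zero (dqCoeff_ne_zero hq0 hq m.succ_ne_zero) (inv_ne_zero hlam))
      (p := p.restrictScalars k) (fun x hx => p.smul_mem E hx)
      (by rwa [Ne, Submodule.restrictScalars_eq_bot_iff])
  refine .inr (Submodule.restrictScalars_eq_top_iff k B V |>.mp ?_)
  rw [eq_top_iff, ← hspan, Submodule.span_le]
  rintro _ ⟨m, rfl⟩
  exact p.smul_mem _ hv

end IsDqSl2

/-- Every Verma module `M(λ)` over `D_q(sl₂)` is simple, for every
`λ ≠ 0` and `q` not a root of unity; consequently `D_q(sl₂)` has no nonzero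
finite-dimensional representations. -/
theorem stmt_16 {k : Type*} [Field k] (q : k) (hq0 : q ≠ 0)
    (hq : ∀ n : ℕ, 1 ≤ n → q ^ n ≠ 1)
    {A : Type*} [Ring A] [Algebra k A] (E F K Kinv : A)
    (hK : K * Kinv = 1) (hK' : Kinv * K = 1)
    (hKE : K * E = (q ^ 2) • (E * K))
    (hKF : K * F = ((q ^ 2)⁻¹) • (F * K))
    (hEF : E * F - F * E = ((q⁻¹ - q)⁻¹) • Kinv) :
    -- (a) every Verma module `M(λ)` is simple:
    (∀ (V : Type*) [AddCommGroup V] [Module k V] [Module A V] [IsScalarTower k A V]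
        (lam : k), lam ≠ 0 → ∀ v : V,
        K • v = lam • v → E • v = (0 : V) →
        LinearIndependent k (fun m : ℕ => (F ^ m) • v) →
        Submodule.span k (Set.range fun m : ℕ => (F ^ m) • v) = ⊤ →
        ∀ p : Submodule A V, p = ⊥ ∨ p = ⊤) ∧
    -- (b) no nonzero finite-dimensional representations:
    (∀ (V : Type*) [AddCommGroup V] [Module k V],
        FiniteDimensional k V → Nontrivial V →
        IsEmpty (A →ₐ[k] Module.End k V)) := by
  have h : IsDqSl2 q E F K Kinv := ⟨hK, hK', hKE, hKF, hEF⟩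
  exact ⟨fun V _ _ _ _ _ hlam _ hKv hEv hli hspan p =>
      h.verma_eq_bot_or_eq_top hq0 hq hlam hKv hEv hli hspan p,
    fun V _ _ _ _ => h.isEmpty_algHom hq0 hq⟩
end

section
/- Let G be a finite group and ω ∈ Z³(G, k*) a normalized 3-cocycle. Then the transgression τ(ω) defined by τ(ω)(g,h)(x) = ω(g, h, h^{-1}g^{-1}xgh) ω(x, g, h) / ω(g, g^{-1}xg, h) is a 2-cocycle for G with values in the group algebra functions on G under the adjoint action: for all g,h,l,x ∈ G, τ(ω)(g,h)(x) τ(ω)(gh, l)(x) = τ(ω)(h,l)(g^{-1}xg) τ(ω)(g, hl)(x). -/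
/-!
Write `y = g⁻¹xg`, `z = h⁻¹yh`, `w = l⁻¹zl`. Expanding both sides of the 2-cocycle identity
for `τ(ω)`, their quotient is `dω(x,g,h,l) · dω(g,y,h,l)⁻¹ · dω(g,h,z,l) · dω(g,h,l,w)⁻¹`,
where `dω` is the coboundary of `ω`: the twelve values of `ω` in the identity and the four
values `ω(g,h,l)`, `ω(xg,h,l)`, `ω(g,hz,l)`, `ω(g,h,lw)` shared by consecutive terms cancel.
Since `ω` is a cocycle, each factor is trivial.
-/

section Transgression

variable {G A : Type*} [Group G] [CommGroup A]

def transgression (ω : G → G → G → A) (g h x : G) : A :=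
  ω g h (h⁻¹ * g⁻¹ * x * g * h) * ω x g h * (ω g (g⁻¹ * x * g) h)⁻¹

theorem transgression_mul_transgression (ω : G → G → G → A)
    (hω : ∀ g h K l : G,
      ω h K l * ω g (h * K) l * ω g h K = ω g h (K * l) * ω (g * h) K l)
    (g h l x : G) :
    transgression ω g h x * transgression ω (g * h) l x =
      transgression ω h l (g⁻¹ * x * g) * transgression ω g (h * l) x := by
  set ω' : G → G → G → Additive A := fun a b c => Additive.ofMul (ω a b c)
  have hω' (g h K l : G) :
      ω' h K l + ω' g (h * K) l + ω' g h K = ω' g h (K * l) + ω' (g * h) K l :=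
    congrArg Additive.ofMul (hω g h K l)
  have hx := hω' x g h l
  have hy := hω' g (g⁻¹ * x * g) h l
  have hz := hω' g h (h⁻¹ * g⁻¹ * x * g * h) l
  have hw := hω' g h l (l⁻¹ * h⁻¹ * g⁻¹ * x * g * h * l)
  apply Additive.ofMul.injective
  simp only [transgression, ofMul_mul, ofMul_inv]
  simp only [mul_assoc, mul_inv_rev, mul_inv_cancel_left] at hx hy hz hw ⊢
  linear_combination (norm := abel) hx - hy + hz - hw

end Transgression

theorem stmt_18_general {G : Type*} [Group G] {k : Type*} [Field k]
    (ω : G → G → G → kˣ)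
    (hcocycle : ∀ g h K l : G,
      ω h K l * ω g (h * K) l * ω g h K = ω g h (K * l) * ω (g * h) K l)
    (τ : G → G → G → kˣ)
    (hτ : ∀ g h x : G, τ g h x =
      ω g h (h⁻¹ * g⁻¹ * x * g * h) * ω x g h * (ω g (g⁻¹ * x * g) h)⁻¹) :
    ∀ g h l x : G,
      τ g h x * τ (g * h) l x = τ h l (g⁻¹ * x * g) * τ g (h * l) x := by
  obtain rfl : τ = transgression ω := funext₃ hτ
  exact transgression_mul_transgression ω hcocycle

/-- The transgression `τ(ω)` of a normalized 3-cocycle `ω ∈ Z³(G, k*)`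
is a 2-cocycle for `G` with values in `k*`-valued functions on `G` with the adjoint
action of `G` on the argument. -/
theorem stmt_18 {G : Type*} [Group G] {k : Type*} [Field k]
    (ω : G → G → G → kˣ)
    (hcocycle : ∀ g h K l : G,
      ω h K l * ω g (h * K) l * ω g h K = ω g h (K * l) * ω (g * h) K l)
    (hnorm : ∀ g h K : G, g = 1 ∨ h = 1 ∨ K = 1 → ω g h K = 1)
    (τ : G → G → G → kˣ)
    (hτ : ∀ g h x : G, τ g h x =
      ω g h (h⁻¹ * g⁻¹ * x * g * h) * ω x g h * (ω g (g⁻¹ * x * g) h)⁻¹) :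
    ∀ g h l x : G,
      τ g h x * τ (g * h) l x = τ h l (g⁻¹ * x * g) * τ g (h * l) x :=
  stmt_18_general ω hcocycle τ hτ
end
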